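/- arXiv:1102.1704 — 3 statements merged into one kernel-verified Lean document; each statement's English description precedes it below -/
import Mathlib

section
/- Let M be a compact topological manifold (a nonempty compact Hausdorff topological space that is locally Euclidean of some dimension n, i.e. every point has an open neighborhood homeomorphic to an open subset of ℝⁿ). Let A and B be open subsets of M with A ∪ B = M, and suppose that A has only finitely many connected components and B has only finitely many connected components. Then A ∩ B has only finitely many connected components. -/
/-!
A manifold is locally connected, so the components of the open set `A ∩ B` are open. Separate the
disjoint closed sets `Aᶜ ⊆ B` and `Bᶜ` by an open `W` with `Aᶜ ⊆ W` and `closure W ⊆ B`. A component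
`C` of `A ∩ B` either meets the compact set `frontier W ⊆ A ∩ B`, which only finitely many of the
disjoint open components can do, or lies in `W` or outside `closure W`. In the first of these cases
`closure C ⊆ B`, so `C` is closed in `A` and is therefore a whole component of `A`; in the second,
symmetrically, `C` is a component of `B`.
-/

open Set Topology

section

variable {X : Type*} [TopologicalSpace X]

theorem locallyConnectedSpace_of_isOpen_cover
    (h : ∀ x : X, ∃ U : Set X, x ∈ U ∧ IsOpen U ∧ LocallyConnectedSpace U) :
    LocallyConnectedSpace X := by
  refine locallyConnectedSpace_iff_connected_subsets.2 fun x N hN => ?_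
  obtain ⟨U, hxU, hU, hUlc⟩ := h x
  have hN' : Subtype.val ⁻¹' N ∈ 𝓝 (⟨x, hxU⟩ : U) :=
    continuous_subtype_val.continuousAt.preimage_mem_nhds hN
  obtain ⟨V, hV, hVconn, hVN⟩ := locallyConnectedSpace_iff_connected_subsets.1 hUlc _ _ hN'
  refine ⟨Subtype.val '' V, ?_, hVconn.image _ continuous_subtype_val.continuousOn,
    (image_mono hVN).trans (image_preimage_subset _ _)⟩
  have hmap := hU.isOpenEmbedding_subtypeVal.map_nhds_eq ⟨x, hxU⟩
  exact hmap ▸ Filter.image_mem_map hV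

noncomputable def ConnectedComponents.equivRangeConnectedComponentIn (F : Set X) :
    ConnectedComponents F ≃ range fun x : F => connectedComponentIn F x :=
  (Quotient.congrRight fun u v => by
    change connectedComponent u = connectedComponent v ↔
      connectedComponentIn F u = connectedComponentIn F v
    rw [connectedComponentIn_eq_image u.2, connectedComponentIn_eq_image v.2]
    exact Subtype.val_injective.image_injective.eq_iff.symm).trans
  (Setoid.quotientKerEquivRange _)

theorem finite_connectedComponents_iff {F : Set X} :
    Finite (ConnectedComponents F) ↔ (connectedComponentIn F '' F).Finite := by
  rw [image_eq_range, ← finite_coe_iff]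
  exact (ConnectedComponents.equivRangeConnectedComponentIn F).finite_iff

theorem closure_connectedComponentIn_inter_subset (F : Set X) (x : X) :
    closure (connectedComponentIn F x) ∩ F ⊆ connectedComponentIn F x := by
  by_cases hx : x ∈ F
  · have hconn : IsPreconnected (closure (connectedComponentIn F x) ∩ F) :=
      isPreconnected_connectedComponentIn.subset_closure
        (subset_inter subset_closure (connectedComponentIn_subset F x)) inter_subset_left
    exact hconn.subset_connectedComponentIn
      ⟨subset_closure (mem_connectedComponentIn hx), hx⟩ inter_subset_right
  · simp [connectedComponentIn_eq_empty hx]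

theorem connectedComponentIn_inter_eq_left {A B : Set X} {x : X} (hx : x ∈ A ∩ B)
    (hopen : IsOpen (connectedComponentIn (A ∩ B) x))
    (hB : closure (connectedComponentIn (A ∩ B) x) ⊆ B) :
    connectedComponentIn (A ∩ B) x = connectedComponentIn A x := by
  refine (connectedComponentIn_mono x inter_subset_left).antisymm ?_
  refine isPreconnected_connectedComponentIn.subset_of_closure_inter_subset hopen
    ⟨x, mem_connectedComponentIn hx.1, mem_connectedComponentIn hx⟩ ?_
  rintro z ⟨hzC, hzA⟩
  exact closure_connectedComponentIn_inter_subset _ _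
    ⟨hzC, connectedComponentIn_subset A x hzA, hB hzC⟩

theorem connectedComponentIn_inter_eq_right {A B : Set X} {x : X} (hx : x ∈ A ∩ B)
    (hopen : IsOpen (connectedComponentIn (A ∩ B) x))
    (hA : closure (connectedComponentIn (A ∩ B) x) ⊆ A) :
    connectedComponentIn (A ∩ B) x = connectedComponentIn B x := by
  rw [inter_comm] at hx hopen hA ⊢
  exact connectedComponentIn_inter_eq_left hx hopen hA

theorem IsCompact.finite_image_connectedComponentIn [LocallyConnectedSpace X]
    {F S : Set X} (hF : IsOpen F) (hS : IsCompact S) (hSF : S ⊆ F) :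
    (connectedComponentIn F '' S).Finite := by
  obtain ⟨t, -, ht, hcover⟩ := hS.elim_finite_subcover_image
    (fun _ _ => hF.connectedComponentIn)
    (fun x hx => mem_biUnion hx (mem_connectedComponentIn (hSF hx)))
  refine (ht.image (connectedComponentIn F)).subset ?_
  rintro _ ⟨y, hy, rfl⟩
  obtain ⟨x, hxt, hyx⟩ := mem_iUnion₂.1 (hcover hy)
  exact ⟨x, hxt, connectedComponentIn_eq hyx⟩

theorem connectedComponentIn_inter_mem [LocallyConnectedSpace X] {A B W : Set X}
    (hA : IsOpen A) (hB : IsOpen B) (hW : IsOpen W) (hAW : Aᶜ ⊆ W) (hWB : closure W ⊆ B)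
    {x : X} (hx : x ∈ A ∩ B) :
    connectedComponentIn (A ∩ B) x ∈
      connectedComponentIn A '' A ∪ connectedComponentIn B '' B ∪
        connectedComponentIn (A ∩ B) '' frontier W := by
  set C := connectedComponentIn (A ∩ B) x
  have hC : IsOpen C := (hA.inter hB).connectedComponentIn
  by_cases hfr : (C ∩ frontier W).Nonempty
  · obtain ⟨y, hyC, hyW⟩ := hfr
    exact Or.inr ⟨y, hyW, (connectedComponentIn_eq hyC).symm⟩
  have hsplit : C ⊆ W ∪ (closure W)ᶜ := fun z hz => by
    by_contra h
    simp only [mem_union, mem_compl_iff, not_or, not_not] at h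
    exact hfr ⟨z, hz, hW.frontier_eq ▸ ⟨h.2, h.1⟩⟩
  rcases isPreconnected_connectedComponentIn.subset_or_subset hW isClosed_closure.isOpen_compl
      (disjoint_compl_right.mono_left subset_closure) hsplit with hCW | hCW
  · refine Or.inl (Or.inl ⟨x, hx.1, ?_⟩)
    exact (connectedComponentIn_inter_eq_left hx hC ((closure_mono hCW).trans hWB)).symm
  · have hCA : closure C ⊆ A :=
      closure_minimal (hCW.trans (compl_subset_compl.2 subset_closure)) hW.isClosed_compl
        |>.trans (compl_subset_comm.1 hAW)
    exact Or.inl (Or.inr ⟨x, hx.2, (connectedComponentIn_inter_eq_right hx hC hCA).symm⟩)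

theorem Set.Finite.image_connectedComponentIn_inter [LocallyConnectedSpace X] [NormalSpace X]
    [CompactSpace X] {A B : Set X} (hA : IsOpen A) (hB : IsOpen B) (hAB : A ∪ B = univ)
    (hfA : (connectedComponentIn A '' A).Finite) (hfB : (connectedComponentIn B '' B).Finite) :
    (connectedComponentIn (A ∩ B) '' (A ∩ B)).Finite := by
  obtain ⟨W, hW, hAW, hWB⟩ :=
    normal_exists_closure_subset hA.isClosed_compl hB (compl_subset_iff_union.2 hAB)
  have hfrontier : frontier W ⊆ A ∩ B := fun z hz => by
    rw [hW.frontier_eq] at hz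
    exact ⟨not_not.1 fun hzA => hz.2 (hAW hzA), hWB hz.1⟩
  refine ((hfA.union hfB).union (isClosed_frontier.isCompact.finite_image_connectedComponentIn
    (hA.inter hB) hfrontier)).subset ?_
  rintro _ ⟨x, hx, rfl⟩
  exact connectedComponentIn_inter_mem hA hB hW hAW hWB hx

end

theorem finite_components_inter_general {n : ℕ} (M : Type*) [TopologicalSpace M]
    [CompactSpace M] [T2Space M]
    (hloc : ∀ x : M, ∃ U : Set M, x ∈ U ∧ IsOpen U ∧
      ∃ V : Set (EuclideanSpace ℝ (Fin n)), IsOpen V ∧ Nonempty (U ≃ₜ V))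
    (A B : Set M) (hA : IsOpen A) (hB : IsOpen B) (hAB : A ∪ B = Set.univ)
    (hfA : Finite (ConnectedComponents ↥A))
    (hfB : Finite (ConnectedComponents ↥B)) :
    Finite (ConnectedComponents ↥(A ∩ B)) := by
  have : LocallyConnectedSpace M := locallyConnectedSpace_of_isOpen_cover fun x => by
    obtain ⟨U, hxU, hU, V, hV, ⟨e⟩⟩ := hloc x
    have : LocallyConnectedSpace V := hV.locallyConnectedSpace
    exact ⟨U, hxU, hU, e.locallyConnectedSpace⟩
  rw [finite_connectedComponents_iff] at hfA hfB ⊢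
  exact hfA.image_connectedComponentIn_inter hA hB hAB hfB

/-- Mayer–Vietoris component counting: if a compact topological manifold `M`
(a nonempty compact Hausdorff space in which every point has an open
neighborhood homeomorphic to an open subset of `ℝⁿ`) is covered by two open
sets `A` and `B`, each with only finitely many connected components, then
`A ∩ B` has only finitely many connected components. -/
theorem finite_components_inter {n : ℕ} (M : Type*) [TopologicalSpace M]
    [CompactSpace M] [T2Space M] [Nonempty M]
    (hloc : ∀ x : M, ∃ U : Set M, x ∈ U ∧ IsOpen U ∧
      ∃ V : Set (EuclideanSpace ℝ (Fin n)), IsOpen V ∧ Nonempty (U ≃ₜ V))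
    (A B : Set M) (hA : IsOpen A) (hB : IsOpen B) (hAB : A ∪ B = Set.univ)
    (hfA : Finite (ConnectedComponents ↥A))
    (hfB : Finite (ConnectedComponents ↥B)) :
    Finite (ConnectedComponents ↥(A ∩ B)) :=
  finite_components_inter_general M hloc A B hA hB hAB hfA hfB
end

section
/- Let m ≤ n be natural numbers and let f : ℝᵐ → ℝⁿ be a continuously differentiable map. Let Σ := {x ∈ ℝᵐ : the derivative Df(x) : ℝᵐ → ℝⁿ is not injective} be the set of critical points of f (the points where Df(x) has rank strictly less than m). Then the image f(Σ) of the critical set has m-dimensional Hausdorff measure zero: ℋᵐ(f(Σ)) = 0. -/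
/-!
Near a critical point `z`, on `closedBall z ρ` the map `f` stays within `ε ρ` of its affine
approximation, whose image is a ball of radius `L ρ` in `range (Df z)`, a subspace of dimension
`< m`. Hence `f '' closedBall z ρ` is covered by about `(L / ε) ^ (m - 1)` balls of radius
`2 ε ρ`. Cutting a compact part of the critical set into about `ρ ^ (-m)` pieces of diameter `ρ`
gives covers of its image at every scale with `∑ diam ^ m ≲ ε`, and `ε` is arbitrary.
-/

open Set Metric Module Filter Topology Function MeasureTheory
open scoped ENNReal

-- `-a + (2 j + 1) a / N` is the midpoint of the `j`-th of `N` equal subintervals of `[-a, a]`.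
theorem exists_fin_abs_sub_le {a t : ℝ} (ht : |t| ≤ a) {N : ℕ} (hN : 0 < N) :
    ∃ j : Fin N, |t - (-a + (2 * j + 1) * a / N)| ≤ a / N := by
  have hNR : (0 : ℝ) < N := by exact_mod_cast hN
  rcases (abs_nonneg t |>.trans ht).eq_or_lt with rfl | ha
  · exact ⟨⟨0, hN⟩, by simp_all⟩
  obtain ⟨ht₁, ht₂⟩ := abs_le.1 ht
  set h := 2 * a / N
  have hh : 0 < h := by positivity
  set j : ℕ := min (N - 1) ⌊(t + a) / h⌋₊ with hj
  have hlow : j * h ≤ t + a := by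
    rw [← le_div_iff₀ hh]
    exact (Nat.cast_le.2 (min_le_right _ _)).trans (Nat.floor_le (div_nonneg (by linarith) hh.le))
  have hup : t + a ≤ (j + 1) * h := by
    rcases le_total ⌊(t + a) / h⌋₊ (N - 1) with hfl | hfl
    · rw [← div_le_iff₀ hh, hj, min_eq_right hfl]
      exact (Nat.lt_floor_add_one _).le
    · have : (j : ℝ) + 1 = N := by
        rw [hj, min_eq_left hfl]; norm_cast; omega
      rw [this]; simp only [h]; field_simp; linarith
  refine ⟨⟨j, by omega⟩, abs_le.2 ⟨?_, ?_⟩⟩ <;>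
  · simp only [h] at hlow hup; field_simp at hlow hup ⊢; linarith

theorem EuclideanSpace.exists_finset_card_le_closedBall_subset (k : ℕ) (a : ℝ) {N : ℕ}
    (hN : 0 < N) :
    ∃ c : Finset (EuclideanSpace ℝ (Fin k)), c.card ≤ N ^ k ∧
      closedBall 0 a ⊆ ⋃ x ∈ c, closedBall x (√k * a / N) := by
  classical
  let g : (Fin k → Fin N) → EuclideanSpace ℝ (Fin k) :=
    fun j => WithLp.toLp 2 fun i => -a + (2 * j i + 1) * a / N
  refine ⟨Finset.univ.image g, Finset.card_image_le.trans (by simp), fun y hy => ?_⟩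
  have hya := mem_closedBall_zero_iff.1 hy
  have ha : 0 ≤ a := (norm_nonneg y).trans hya
  choose j hj using fun i => exists_fin_abs_sub_le ((PiLp.norm_apply_le y i).trans hya) hN
  refine mem_iUnion₂.2 ⟨g j, Finset.mem_image_of_mem g (Finset.mem_univ j), ?_⟩
  rw [mem_closedBall, EuclideanSpace.dist_eq]
  calc √(∑ i, dist (y i) (g j i) ^ 2) ≤ √(∑ _i : Fin k, (a / N) ^ 2) := by
        gcongr with i
        exact hj i
    _ = √k * a / N := by
        rw [Finset.sum_const, Finset.card_univ, Fintype.card_fin, nsmul_eq_mul,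
          Real.sqrt_mul (Nat.cast_nonneg k), Real.sqrt_sq (by positivity), mul_div_assoc]

section Cover

variable {E : Type*} [NormedAddCommGroup E] [InnerProductSpace ℝ E]

theorem exists_finset_card_le_closedBall_subset [FiniteDimensional ℝ E] {a r : ℝ} (ha : 0 ≤ a)
    (hr : 0 < r) :
    ∃ c : Finset E, (c.card : ℝ) ≤ (√(finrank ℝ E) * a / r + 1) ^ finrank ℝ E ∧
      closedBall 0 a ⊆ ⋃ x ∈ c, closedBall x r := by
  classical
  set k := finrank ℝ E
  set t := √k * a / r
  have ht : 0 ≤ t := by positivity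
  set N := max 1 ⌈t⌉₊
  have hN : 0 < N := by positivity
  have htN : t ≤ N := (Nat.le_ceil t).trans (mod_cast le_max_right _ _)
  have hNt : (N : ℝ) ≤ t + 1 := by
    rw [Nat.cast_max, Nat.cast_one, max_le_iff]
    exact ⟨by linarith, (Nat.ceil_lt_add_one ht).le⟩
  let e := (stdOrthonormalBasis ℝ E).repr
  obtain ⟨c, hcard, hcover⟩ := EuclideanSpace.exists_finset_card_le_closedBall_subset k a hN
  refine ⟨c.image e.symm, ?_, fun y hy => ?_⟩
  · calc ((c.image e.symm).card : ℝ) ≤ (N ^ k : ℕ) :=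
          mod_cast Finset.card_image_le.trans hcard
      _ ≤ (t + 1) ^ k := by push_cast; gcongr
  · have hey : e y ∈ closedBall 0 a := by simpa using hy
    obtain ⟨x, hx, hyx⟩ := mem_iUnion₂.1 (hcover hey)
    refine mem_iUnion₂.2 ⟨e.symm x, Finset.mem_image_of_mem _ hx, ?_⟩
    rw [mem_closedBall, ← e.dist_map, e.apply_symm_apply]
    refine (mem_closedBall.1 hyx).trans ?_
    rwa [div_le_iff₀ (by positivity), ← div_le_iff₀' hr]

theorem Submodule.exists_finset_card_le_inter_closedBall_subset (W : Submodule ℝ E)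
    [FiniteDimensional ℝ W] {a r : ℝ} (ha : 0 ≤ a) (hr : 0 < r) :
    ∃ c : Finset E, (c.card : ℝ) ≤ (√(finrank ℝ W) * a / r + 1) ^ finrank ℝ W ∧
      (W : Set E) ∩ closedBall 0 a ⊆ ⋃ x ∈ c, closedBall x r := by
  obtain ⟨c, hcard, hcover⟩ := exists_finset_card_le_closedBall_subset (E := W) ha hr
  refine ⟨c.map (Function.Embedding.subtype _), by simpa using hcard, ?_⟩
  rintro w ⟨hw, hwa⟩
  have hw' : (⟨w, hw⟩ : W) ∈ closedBall 0 a := by simpa using hwa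
  obtain ⟨x, hx, hwx⟩ := mem_iUnion₂.1 (hcover hw')
  exact mem_iUnion₂.2 ⟨x, Finset.mem_map_of_mem _ hx, hwx⟩

end Cover

theorem LinearMap.finrank_range_lt_of_not_injective {K V V₂ : Type*} [DivisionRing K]
    [AddCommGroup V] [Module K V] [AddCommGroup V₂] [Module K V₂] [FiniteDimensional K V]
    {f : V →ₗ[K] V₂} (hf : ¬Injective f) : finrank K (range f) < finrank K V := by
  have hker : finrank K (ker f) ≠ 0 := by
    rwa [Ne, Submodule.finrank_eq_zero, LinearMap.ker_eq_bot]
  have := f.finrank_range_add_finrank_ker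
  omega

section LocalCover

variable {E F : Type*} [NormedAddCommGroup E] [NormedSpace ℝ E]
  [NormedAddCommGroup F] [InnerProductSpace ℝ F]

theorem exists_finset_card_le_image_closedBall_subset_of_approx {f : E → F}
    {W : Submodule ℝ F} [FiniteDimensional ℝ W] {T : E →L[ℝ] F} (hTW : ∀ v, T v ∈ W)
    {z : E} {ρ ε L : ℝ} (hρ : 0 < ρ) (hε : 0 < ε) (hT : ‖T‖ ≤ L)
    (happrox : ∀ y ∈ closedBall z ρ, ‖f y - f z - T (y - z)‖ ≤ ε * ρ) :
    ∃ c : Finset F, (c.card : ℝ) ≤ (√(finrank ℝ W) * L / ε + 1) ^ finrank ℝ W ∧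
      f '' closedBall z ρ ⊆ ⋃ x ∈ c, closedBall x (2 * ε * ρ) := by
  classical
  have hL : 0 ≤ L := (norm_nonneg T).trans hT
  obtain ⟨c, hcard, hcover⟩ :=
    W.exists_finset_card_le_inter_closedBall_subset (mul_nonneg hL hρ.le) (mul_pos hε hρ)
  refine ⟨c.image (f z + ·), ?_, ?_⟩
  · refine (Nat.cast_le.2 Finset.card_image_le).trans (hcard.trans_eq ?_)
    rw [← mul_assoc, mul_div_mul_right _ _ hρ.ne']
  rintro _ ⟨y, hy, rfl⟩
  have hTy : T (y - z) ∈ (W : Set F) ∩ closedBall 0 (L * ρ) :=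
    ⟨hTW _, mem_closedBall_zero_iff.2 <| (T.le_opNorm _).trans <|
      mul_le_mul hT (mem_closedBall_iff_norm.1 hy) (norm_nonneg _) hL⟩
  obtain ⟨x, hx, hTx⟩ := mem_iUnion₂.1 (hcover hTy)
  refine mem_iUnion₂.2 ⟨f z + x, Finset.mem_image_of_mem _ hx, ?_⟩
  calc dist (f y) (f z + x)
      ≤ dist (f y) (f z + T (y - z)) + dist (f z + T (y - z)) (f z + x) := dist_triangle _ _ _
    _ ≤ ε * ρ + ε * ρ := by
        rw [dist_add_left, dist_eq_norm, ← sub_sub]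
        exact add_le_add (happrox y hy) (mem_closedBall.1 hTx)
    _ = 2 * ε * ρ := by ring

theorem exists_finset_card_le_image_closedBall_subset_of_not_injective [FiniteDimensional ℝ E]
    {f : E → F} {z : E} {ρ ε L : ℝ} (hρ : 0 < ρ) (hε : 0 < ε)
    (hdiff : ∀ w ∈ closedBall z ρ, DifferentiableAt ℝ f w)
    (hclose : ∀ w ∈ closedBall z ρ, ‖fderiv ℝ f w - fderiv ℝ f z‖ ≤ ε)
    (hL : ‖fderiv ℝ f z‖ ≤ L) (hz : ¬Injective (fderiv ℝ f z)) :
    ∃ c : Finset F, (c.card : ℝ) ≤ (√(finrank ℝ E) * L / ε + 1) ^ (finrank ℝ E - 1) ∧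
      f '' closedBall z ρ ⊆ ⋃ x ∈ c, closedBall x (2 * ε * ρ) := by
  have happrox (y) (hy : y ∈ closedBall z ρ) :
      ‖f y - f z - fderiv ℝ f z (y - z)‖ ≤ ε * ρ :=
    ((convex_closedBall z ρ).norm_image_sub_le_of_norm_fderiv_le' hdiff hclose
      (mem_closedBall_self hρ.le) hy).trans
      (mul_le_mul_of_nonneg_left (mem_closedBall_iff_norm.1 hy) hε.le)
  obtain ⟨c, hcard, hcover⟩ := exists_finset_card_le_image_closedBall_subset_of_approx
    (LinearMap.mem_range_self (fderiv ℝ f z : E →ₗ[ℝ] F)) hρ hε hL happrox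
  refine ⟨c, hcard.trans ?_, hcover⟩
  have hL0 : 0 ≤ L := (norm_nonneg _).trans hL
  set k := finrank ℝ (LinearMap.range (fderiv ℝ f z : E →ₗ[ℝ] F))
  have hk : k < finrank ℝ E := LinearMap.finrank_range_lt_of_not_injective hz
  calc (√k * L / ε + 1) ^ k ≤ (√(finrank ℝ E) * L / ε + 1) ^ k := by gcongr
    _ ≤ _ := pow_le_pow_right₀ (by simp only [le_add_iff_nonneg_left]; positivity) (by omega)

end LocalCover

theorem Metric.ediam_closedBall_le {X : Type*} [PseudoMetricSpace X] (x : X) (r : ℝ) :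
    ediam (closedBall x r) ≤ ENNReal.ofReal (2 * r) :=
  ediam_le_of_forall_dist_le fun _ hy _ hz =>
    (dist_triangle_right _ _ x).trans (by linarith [mem_closedBall.1 hy, mem_closedBall.1 hz])

theorem MeasureTheory.hausdorffMeasure_le_of_forall_exists_finset_closedBall {X : Type*}
    [MetricSpace X] [MeasurableSpace X] [BorelSpace X] {d C : ℝ} (hd : 0 ≤ d) {s : Set X}
    (h : ∀ δ > 0, ∃ r ∈ Icc 0 δ, ∃ c : Finset X,
      s ⊆ ⋃ x ∈ c, closedBall x r ∧ c.card * (2 * r) ^ d ≤ C) :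
    μH[d] s ≤ ENNReal.ofReal C := by
  choose r hr c hcover hsum using fun n : ℕ => h (1 / (n + 1)) Nat.one_div_pos_of_nat
  have hlim : Tendsto (fun n : ℕ => ENNReal.ofReal (2 * (1 / (n + 1)))) atTop (𝓝 0) := by
    simpa using ENNReal.tendsto_ofReal (tendsto_one_div_add_atTop_nhds_zero_nat.const_mul 2)
  have hdiam (n : ℕ) (x : c n) : ediam (closedBall (x : X) (r n)) ≤ ENNReal.ofReal (2 * r n) :=
    ediam_closedBall_le _ _
  refine (Measure.hausdorffMeasure_le_liminf_sum d s _ hlim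
    (fun n (x : c n) => closedBall (x : X) (r n))
    (.of_forall fun n x => (hdiam n x).trans (ENNReal.ofReal_le_ofReal (by linarith [(hr n).2])))
    (.of_forall fun n => by simpa [iUnion_subtype] using hcover n)).trans ?_
  refine (liminf_le_liminf (.of_forall fun n => ?_)).trans (liminf_const (ENNReal.ofReal C)).le
  calc ∑ x : c n, ediam (closedBall (x : X) (r n)) ^ d
      ≤ ∑ _x : c n, ENNReal.ofReal ((2 * r n) ^ d) := by
        gcongr with x
        rw [← ENNReal.ofReal_rpow_of_nonneg (by linarith [(hr n).1]) hd]
        exact ENNReal.rpow_le_rpow (hdiam n x) hd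
    _ = ENNReal.ofReal ((c n).card * (2 * r n) ^ d) := by
        rw [Finset.sum_const, nsmul_eq_mul, ENNReal.ofReal_mul (Nat.cast_nonneg _),
          ENNReal.ofReal_natCast, Finset.card_univ, Fintype.card_coe]
    _ ≤ ENNReal.ofReal C := ENNReal.ofReal_le_ofReal (hsum n)

section Sard

variable {E F : Type*} [NormedAddCommGroup E] [InnerProductSpace ℝ E] [FiniteDimensional ℝ E]
  [NormedAddCommGroup F] [InnerProductSpace ℝ F]

theorem exists_finset_card_le_image_subset_of_not_injective {f : E → F}
    (hf : Differentiable ℝ f) {A : Set E} {R ρ ε L : ℝ} (hR : 0 ≤ R) (hρ : 0 < ρ)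
    (hε : 0 < ε) (hAR : A ⊆ closedBall 0 R) (hcrit : ∀ z ∈ A, ¬Injective (fderiv ℝ f z))
    (hL0 : 0 ≤ L) (hL : ∀ z ∈ A, ‖fderiv ℝ f z‖ ≤ L)
    (hclose : ∀ z ∈ A, ∀ w ∈ closedBall z ρ,
      ‖fderiv ℝ f w - fderiv ℝ f z‖ ≤ ε) :
    ∃ c : Finset F, (c.card : ℝ) ≤ (√(finrank ℝ E) * R / (ρ / 2) + 1) ^ finrank ℝ E *
        (√(finrank ℝ E) * L / ε + 1) ^ (finrank ℝ E - 1) ∧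
      f '' A ⊆ ⋃ x ∈ c, closedBall x (2 * ε * ρ) := by
  classical
  set k := finrank ℝ E
  have hpiece (p : E) : ∃ c : Finset F, (c.card : ℝ) ≤ (√k * L / ε + 1) ^ (k - 1) ∧
      f '' (A ∩ closedBall p (ρ / 2)) ⊆ ⋃ x ∈ c, closedBall x (2 * ε * ρ) := by
    rcases (A ∩ closedBall p (ρ / 2)).eq_empty_or_nonempty with h | ⟨z, hzA, hzp⟩
    · exact ⟨∅, by simp only [Finset.card_empty, Nat.cast_zero]; positivity, by simp [h]⟩
    obtain ⟨c, hcard, hcover⟩ := exists_finset_card_le_image_closedBall_subset_of_not_injective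
      hρ hε (fun w _ => hf w) (hclose z hzA) (hL z hzA) (hcrit z hzA)
    refine ⟨c, hcard, (image_mono fun y hy => ?_).trans hcover⟩
    rw [mem_closedBall]
    linarith [dist_triangle_right y z p, mem_closedBall.1 hy.2, mem_closedBall.1 hzp]
  choose c hccard hccover using hpiece
  obtain ⟨P, hPcard, hPcover⟩ :=
    exists_finset_card_le_closedBall_subset (E := E) hR (half_pos hρ)
  refine ⟨P.biUnion c, ?_, ?_⟩
  · calc ((P.biUnion c).card : ℝ)
        ≤ ∑ p ∈ P, ((c p).card : ℝ) := mod_cast Finset.card_biUnion_le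
      _ ≤ P.card * (√k * L / ε + 1) ^ (k - 1) := by
        rw [← nsmul_eq_mul]
        exact Finset.sum_le_card_nsmul _ _ _ fun p _ => hccard p
      _ ≤ _ := by gcongr
  · rintro _ ⟨y, hy, rfl⟩
    obtain ⟨p, hp, hyp⟩ := mem_iUnion₂.1 (hPcover (hAR hy))
    rw [Finset.set_biUnion_biUnion]
    exact mem_iUnion₂.2 ⟨p, hp, hccover p ⟨y, ⟨hy, hyp⟩, rfl⟩⟩

variable [MeasurableSpace F] [BorelSpace F]

theorem ContDiff.exists_hausdorffMeasure_image_critical_inter_closedBall_le [Nontrivial E]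
    {f : E → F} (hf : ContDiff ℝ 1 f) {R : ℝ} (hR : 0 ≤ R) :
    ∃ K : ℝ, ∀ ε ∈ Ioc (0 : ℝ) 1,
      μH[finrank ℝ E] (f '' ({x | ¬Injective (fderiv ℝ f x)} ∩ closedBall 0 R)) ≤
        ENNReal.ofReal (K * ε) := by
  set S := {x | ¬Injective (fderiv ℝ f x)} ∩ closedBall (0 : E) R
  set k := finrank ℝ E
  obtain ⟨j, hj⟩ : ∃ j, k = j + 1 := ⟨k - 1, by have : 0 < k := finrank_pos; omega⟩
  have hcont := (hf.continuous_fderiv one_ne_zero).continuousOn (s := closedBall (0 : E) (R + 1))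
  obtain ⟨L, hL⟩ := (isCompact_closedBall (0 : E) (R + 1)).exists_bound_of_continuousOn hcont
  have hL0 : 0 ≤ L := (norm_nonneg _).trans (hL 0 (mem_closedBall_self (by linarith)))
  refine ⟨4 ^ k * (2 * √k * R + 1) ^ k * (√k * L + 1) ^ j, fun ε ⟨hε, hε1⟩ => ?_⟩
  obtain ⟨r₀, hr₀, hmod⟩ := Metric.uniformContinuousOn_iff.1
    ((isCompact_closedBall (0 : E) (R + 1)).uniformContinuousOn_of_continuous hcont) ε hε
  refine hausdorffMeasure_le_of_forall_exists_finset_closedBall k.cast_nonneg fun δ hδ => ?_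
  set ρ := min (min 1 (r₀ / 2)) (δ / (2 * ε))
  have hρ : 0 < ρ := by positivity
  have hρ1 : ρ ≤ 1 := (min_le_left _ _).trans (min_le_left _ _)
  have hρr₀ : ρ < r₀ :=
    (min_le_left _ _).trans_lt ((min_le_right _ _).trans_lt (half_lt_self hr₀))
  have hρδ : 2 * ε * ρ ≤ δ := by
    have := min_le_right (min 1 (r₀ / 2)) (δ / (2 * ε))
    rwa [le_div_iff₀ (by positivity), mul_comm] at this
  have hball (z) (hz : z ∈ S) : closedBall z ρ ⊆ closedBall 0 (R + 1) :=
    closedBall_subset_closedBall' (by linarith [mem_closedBall.1 hz.2])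
  have hclose (z) (hz : z ∈ S) (w) (hw : w ∈ closedBall z ρ) :
      ‖fderiv ℝ f w - fderiv ℝ f z‖ ≤ ε := by
    rw [← dist_eq_norm]
    exact (hmod w (hball z hz hw) z (hball z hz (mem_closedBall_self hρ.le))
      ((mem_closedBall.1 hw).trans_lt hρr₀)).le
  obtain ⟨c, hcard, hcover⟩ := exists_finset_card_le_image_subset_of_not_injective
    (hf.differentiable one_ne_zero) hR hρ hε inter_subset_right (fun z hz => hz.1) hL0
    (fun z hz => hL z (hball z hz (mem_closedBall_self hρ.le))) hclose
  refine ⟨2 * ε * ρ, ⟨by positivity, hρδ⟩, c, hcover, ?_⟩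
  have hPρ : √k * R / (ρ / 2) + 1 = (2 * √k * R + ρ) / ρ := by field_simp
  have hcε : √k * L / ε + 1 = (√k * L + ε) / ε := by field_simp
  rw [Real.rpow_natCast]
  calc _ ≤ (√k * R / (ρ / 2) + 1) ^ k * (√k * L / ε + 1) ^ (k - 1) *
          (2 * (2 * ε * ρ)) ^ k := by gcongr
    _ = 4 ^ k * (2 * √k * R + ρ) ^ k * (√k * L + ε) ^ j * ε := by
        rw [hPρ, hcε, div_pow, div_pow, hj, Nat.add_sub_cancel]; field_simp; ring
    _ ≤ 4 ^ k * (2 * √k * R + 1) ^ k * (√k * L + 1) ^ j * ε := by gcongr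

end Sard

theorem ContDiff.hausdorffMeasure_image_critical_eq_zero {E F : Type*} [NormedAddCommGroup E]
    [InnerProductSpace ℝ E] [FiniteDimensional ℝ E] [NormedAddCommGroup F]
    [InnerProductSpace ℝ F] [MeasurableSpace F] [BorelSpace F] {f : E → F}
    (hf : ContDiff ℝ 1 f) :
    μH[finrank ℝ E] (f '' {x | ¬Injective (fderiv ℝ f x)}) = 0 := by
  rcases subsingleton_or_nontrivial E with hE | hE
  · have : {x | ¬Injective (fderiv ℝ f x)} = ∅ :=
      eq_empty_of_forall_notMem fun x hx => hx (injective_of_subsingleton _)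
    simp [this]
  rw [← inter_univ {x | _}, ← iUnion_closedBall_nat (0 : E), inter_iUnion, image_iUnion]
  refine measure_iUnion_null fun n => ?_
  obtain ⟨K, hK⟩ := hf.exists_hausdorffMeasure_image_critical_inter_closedBall_le n.cast_nonneg
  have hlim : Tendsto (fun ε => ENNReal.ofReal (K * ε)) (𝓝[>] 0) (𝓝 0) := by
    simpa using (ENNReal.tendsto_ofReal ((continuous_const_mul K).tendsto 0)).mono_left
      nhdsWithin_le_nhds
  exact nonpos_iff_eq_zero.1 (ge_of_tendsto hlim (eventually_of_mem (Ioc_mem_nhdsGT one_pos) hK))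

theorem sard_federer_general {m n : ℕ}
    (f : EuclideanSpace ℝ (Fin m) → EuclideanSpace ℝ (Fin n))
    (hf : ContDiff ℝ 1 f) :
    μH[(m : ℝ)]
      (f '' {x | ¬ Function.Injective (fderiv ℝ f x)}) = 0 := by
  simpa using hf.hausdorffMeasure_image_critical_eq_zero

/-- Federer's version of Sard's theorem for `C¹` maps: if `m ≤ n` and
`f : ℝᵐ → ℝⁿ` is continuously differentiable, then the image of the set of
critical points (points where `Df` is not injective, i.e. has rank `< m`) has
`m`-dimensional Hausdorff measure zero. -/
theorem sard_federer {m n : ℕ} (hmn : m ≤ n)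
    (f : EuclideanSpace ℝ (Fin m) → EuclideanSpace ℝ (Fin n))
    (hf : ContDiff ℝ 1 f) :
    μH[(m : ℝ)]
      (f '' {x | ¬ Function.Injective (fderiv ℝ f x)}) = 0 :=
  sard_federer_general f hf
end

section
/- Let n ≥ 2, let U be a nonempty open connected subset of ℝⁿ (with the Euclidean metric), and let S ⊆ U be a set whose (n−1)-dimensional Hausdorff measure is zero: ℋ^{n−1}(S) = 0. Then the complement U \ S is a connected subset of ℝⁿ. -/
open scoped MeasureTheory

/-!
Two points `x, y` of a convex open set `C` that avoid `S` are joined in `C \ S` by a broken line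
`x → z → y`, with `z` on the hyperplane bisecting `[x, y]`, close to the midpoint. The points `z`
of that hyperplane for which `[x, z]` meets `S` form the central projection of `S` from `x`,
a locally Lipschitz image of `S`, hence an `ℋ^{n-1}`-null set; likewise for `y`. A small disc of
the hyperplane has positive `ℋ^{n-1}` measure, so a good `z` exists. Thus every ball minus `S` is
path-connected, and a clopen argument in the connected open set `U` gives the theorem.
-/

open MeasureTheory Measure Set Metric Module Topology
open scoped RealInnerProductSpace

theorem LocallyLipschitzOn.hausdorffMeasure_image_null {X Y : Type*} [EMetricSpace X]
    [EMetricSpace Y] [MeasurableSpace X] [BorelSpace X] [MeasurableSpace Y] [BorelSpace Y]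
    [SecondCountableTopology X] {f : X → Y} {s : Set X} (hf : LocallyLipschitzOn s f)
    {d : ℝ} (hd : 0 ≤ d) (hs : μH[d] s = 0) : μH[d] (f '' s) = 0 := by
  have hf' : ∀ x ∈ s, ∃ K : NNReal, ∃ t ∈ 𝓝[s] x, LipschitzOnWith K f t := hf
  choose! K t ht hlip using hf'
  obtain ⟨T, hTs, hTc, hcover⟩ := TopologicalSpace.countable_cover_nhdsWithin ht
  have himage : f '' s ⊆ ⋃ x ∈ T, f '' (s ∩ t x) := by
    rw [← image_iUnion₂, ← inter_iUnion₂]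
    exact image_mono (subset_inter subset_rfl hcover)
  refine measure_mono_null himage ((measure_biUnion_null_iff hTc).2 fun x hx => ?_)
  refine le_antisymm ?_ zero_le
  calc μH[d] (f '' (s ∩ t x)) ≤ (K x : ENNReal) ^ d * μH[d] (s ∩ t x) :=
        ((hlip x (hTs hx)).mono inter_subset_right).hausdorffMeasure_image_le hd
    _ = 0 := by rw [measure_mono_null inter_subset_left hs, mul_zero]

theorem ContDiffOn.locallyLipschitzOn_of_isOpen {E F : Type*} [NormedAddCommGroup E]
    [NormedSpace ℝ E] [NormedAddCommGroup F] [NormedSpace ℝ F] {f : E → F} {s : Set E}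
    (hs : IsOpen s) (hf : ContDiffOn ℝ 1 f s) : LocallyLipschitzOn s f := fun x hx => by
  obtain ⟨K, t, ht, hlip⟩ := (hf.contDiffAt (hs.mem_nhds hx)).exists_lipschitzOnWith
  exact ⟨K, t, nhdsWithin_le_nhds ht, hlip⟩

section InnerProductSpace

variable {E : Type*} [NormedAddCommGroup E] [InnerProductSpace ℝ E]

/-- The shadow that `S` casts on the hyperplane `{z | ⟪z - p, u⟫ = e}` from a light source at `p`. -/
def shadow (p u : E) (e : ℝ) (S : Set E) : Set E :=
  {z | ⟪z - p, u⟫ = e ∧ (S ∩ segment ℝ p z).Nonempty}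

noncomputable def centralProjection (p u : E) (e : ℝ) (s : E) : E :=
  p + (e / ⟪s - p, u⟫) • (s - p)

theorem contDiffOn_centralProjection (p u : E) (e : ℝ) :
    ContDiffOn ℝ 1 (centralProjection p u e) {s | ⟪s - p, u⟫ ≠ 0} := by
  have hinner : ContDiff ℝ 1 fun s : E => ⟪s - p, u⟫ :=
    (contDiff_id.sub contDiff_const).inner ℝ contDiff_const
  exact contDiffOn_const.add <| (contDiffOn_const.div hinner.contDiffOn fun _ hs => hs).smul
    (contDiff_id.sub contDiff_const).contDiffOn

theorem shadow_subset_image_centralProjection {p : E} {S : Set E} (hp : p ∉ S) (u : E) {e : ℝ}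
    (he : e ≠ 0) : shadow p u e S ⊆ centralProjection p u e '' (S ∩ {s | ⟪s - p, u⟫ ≠ 0}) := by
  rintro z ⟨hze, s, hsS, a, b, ha, hb, hab, rfl⟩
  have hb0 : b ≠ 0 := by
    rintro rfl
    obtain rfl : a = 1 := by linarith
    exact hp (by simpa using hsS)
  have hsp : a • p + b • z - p = b • (z - p) := by
    rw [show a = 1 - b by linarith]
    module
  have hinner : ⟪a • p + b • z - p, u⟫ = b * e := by rw [hsp, real_inner_smul_left, hze]
  refine ⟨_, ⟨hsS, by simp [hinner, hb0, he]⟩, ?_⟩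
  rw [centralProjection, hinner, hsp, smul_smul, show e / (b * e) * b = 1 by field_simp, one_smul,
    add_sub_cancel]

theorem hausdorffMeasure_shadow_null [MeasurableSpace E] [BorelSpace E]
    [SecondCountableTopology E] {p u : E} {e : ℝ} {S : Set E} {d : ℝ} (hp : p ∉ S) (he : e ≠ 0)
    (hd : 0 ≤ d) (hS : μH[d] S = 0) : μH[d] (shadow p u e S) = 0 := by
  have hopen : IsOpen {s : E | ⟪s - p, u⟫ ≠ 0} :=
    isOpen_ne_fun ((continuous_id.sub continuous_const).inner continuous_const) continuous_const
  refine measure_mono_null (shadow_subset_image_centralProjection hp u he) ?_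
  exact (((contDiffOn_centralProjection p u e).locallyLipschitzOn_of_isOpen hopen).mono
    inter_subset_right).hausdorffMeasure_image_null hd (measure_mono_null inter_subset_left hS)

variable [FiniteDimensional ℝ E] [MeasurableSpace E] [BorelSpace E]

theorem hausdorffMeasure_ball_inter_hyperplane_pos {u : E} (hu : u ≠ 0) (m : E) {ρ : ℝ}
    (hρ : 0 < ρ) : 0 < μH[(finrank ℝ E : ℝ) - 1] (ball m ρ ∩ {z | ⟪z - m, u⟫ = 0}) := by
  set K := (ℝ ∙ u)ᗮ
  have hK : (finrank ℝ E : ℝ) - 1 = finrank ℝ K := by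
    rw [← (ℝ ∙ u).finrank_add_finrank_orthogonal, finrank_span_singleton hu]
    push_cast
    ring
  have hiso : Isometry fun w : K => m + (w : E) := (isometry_add_left m).comp isometry_subtype_coe
  have hsub : (fun w : K => m + (w : E)) '' ball 0 ρ ⊆ ball m ρ ∩ {z | ⟪z - m, u⟫ = 0} := by
    rintro _ ⟨w, hw, rfl⟩
    refine ⟨by simpa using hw, ?_⟩
    simpa [real_inner_comm] using (Submodule.mem_orthogonal_singleton_iff_inner_right.1 w.2)
  rw [hK]
  refine lt_of_lt_of_le ?_ (measure_mono hsub)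
  rw [hiso.hausdorffMeasure_image (Or.inl (Nat.cast_nonneg _))]
  exact measure_ball_pos _ _ hρ

theorem Convex.joinedIn_diff_of_hausdorffMeasure_null {C S : Set E} (hC : Convex ℝ C)
    (hCo : IsOpen C) (hS : μH[(finrank ℝ E : ℝ) - 1] S = 0) {x y : E} (hx : x ∈ C \ S)
    (hy : y ∈ C \ S) : JoinedIn (C \ S) x y := by
  rcases eq_or_ne x y with rfl | hxy
  · exact JoinedIn.refl hx
  have : Nontrivial E := ⟨⟨x, y, hxy⟩⟩
  have hd : (0 : ℝ) ≤ (finrank ℝ E : ℝ) - 1 :=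
    sub_nonneg.2 (by exact_mod_cast Module.finrank_pos (R := ℝ) (M := E))
  set u := y - x
  set m := midpoint ℝ x y
  set e := ⟪m - x, u⟫
  have hmy : ⟪m - y, u⟫ = -e := by
    rw [← inner_neg_left]
    simp only [m, midpoint_sub_left, midpoint_sub_right, ← smul_neg, neg_sub]
  have he : e ≠ 0 := by
    simp [e, m, u, midpoint_sub_left, real_inner_smul_left, sub_eq_zero, hxy.symm]
  obtain ⟨ρ, hρ, hρC⟩ := Metric.isOpen_iff.1 hCo m (hC.midpoint_mem hx.1 hy.1)
  have hnull : μH[(finrank ℝ E : ℝ) - 1] (shadow x u e S ∪ shadow y u (-e) S) = 0 :=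
    measure_union_null (hausdorffMeasure_shadow_null hx.2 he hd hS)
      (hausdorffMeasure_shadow_null hy.2 (neg_ne_zero.2 he) hd hS)
  obtain ⟨z, ⟨hzm, hzu⟩, hz⟩ := sdiff_nonempty.2 fun h =>
    (hausdorffMeasure_ball_inter_hyperplane_pos (sub_ne_zero.2 hxy.symm) m hρ).ne'
      (measure_mono_null h hnull)
  have hzC : z ∈ C := hρC hzm
  have hinner (p : E) : ⟪z - p, u⟫ = ⟪m - p, u⟫ := by
    rw [← sub_add_sub_cancel z m p, inner_add_left, hzu, zero_add]
  have hjoin {p : E} {e' : ℝ} (hp : p ∈ C) (he' : ⟪z - p, u⟫ = e') (hz : z ∉ shadow p u e' S) :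
      JoinedIn (C \ S) p z :=
    JoinedIn.of_segment_subset fun q hq =>
      ⟨hC.segment_subset hp hzC hq, fun hqS => hz ⟨he', q, hqS, hq⟩⟩
  exact (hjoin hx.1 (hinner x) fun h => hz (Or.inl h)).trans
    (hjoin hy.1 ((hinner y).trans hmy) fun h => hz (Or.inr h)).symm

theorem Convex.isPathConnected_diff_of_hausdorffMeasure_null {C S : Set E} (hC : Convex ℝ C)
    (hCo : IsOpen C) (hCne : C.Nonempty) (hS : μH[(finrank ℝ E : ℝ) - 1] S = 0) :
    IsPathConnected (C \ S) := by
  have hS' : μH[finrank ℝ E] S = 0 :=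
    nonpos_iff_eq_zero.1 (hS ▸ hausdorffMeasure_mono (by linarith) S)
  obtain ⟨x, hx⟩ := sdiff_nonempty.2 fun h => (hCo.measure_pos _ hCne).ne' (measure_mono_null h hS')
  exact ⟨x, hx, fun y hy => hC.joinedIn_diff_of_hausdorffMeasure_null hCo hS hx hy⟩

end InnerProductSpace

theorem IsConnected.isPathConnected_diff {X : Type*} [TopologicalSpace X] {U T : Set X}
    (hU : IsConnected U) (hUo : IsOpen U)
    (hloc : ∀ x ∈ U, ∀ V ∈ 𝓝 x, ∃ W ∈ 𝓝 x, W ⊆ V ∧ IsPathConnected (W \ T)) :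
    IsPathConnected (U \ T) := by
  obtain ⟨x, hx⟩ := hU.nonempty
  obtain ⟨W, hW, hWU, hWT⟩ := hloc x hx U (hUo.mem_nhds hx)
  obtain ⟨x₀, hx₀⟩ := hWT.nonempty
  set P := pathComponentIn (U \ T) x₀
  have hsubP {W : Set X} (hW : IsPathConnected (W \ T)) (hWU : W ⊆ U) {z : X} (hzW : z ∈ W \ T)
      (hzP : z ∈ P) : W \ T ⊆ P := fun w hw =>
    hzP.trans ((hW.joinedIn z hzW w hw).mono (sdiff_subset_sdiff_left hWU))
  set A := {y | ∀ᶠ z in 𝓝 y, z ∈ U ∧ (z ∉ T → z ∈ P)}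
  have hA {y : X} {W : Set X} (hW : W ∈ 𝓝 y) (hWU : W ⊆ U) (hWP : W \ T ⊆ P) : y ∈ A := by
    filter_upwards [hW] with z hz using ⟨hWU hz, fun hzT => hWP ⟨hz, hzT⟩⟩
  have hxA : x ∈ A :=
    hA hW hWU (hsubP hWT hWU hx₀ (mem_pathComponentIn_self (sdiff_subset_sdiff_left hWU hx₀)))
  have hUA : U ⊆ A := by
    refine hU.isPreconnected.subset_of_closure_inter_subset isOpen_setOfPred_eventually_nhds
      ⟨x, hx, hxA⟩ ?_
    rintro y ⟨hyA, hyU⟩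
    obtain ⟨W, hW, hWU, hWT⟩ := hloc y hyU U (hUo.mem_nhds hyU)
    obtain ⟨a, haW, haA⟩ := mem_closure_iff_nhds.1 hyA (interior W) (interior_mem_nhds.2 hW)
    obtain ⟨W', -, hW'N, hW'T⟩ :=
      hloc a haA.self_of_nhds.1 _ (Filter.inter_mem (isOpen_interior.mem_nhds haW) haA)
    obtain ⟨z, hzW', hzT⟩ := hW'T.nonempty
    obtain ⟨hzW, -, hzP⟩ := hW'N hzW'
    exact hA hW hWU (hsubP hWT hWU ⟨interior_subset hzW, hzT⟩ (hzP hzT))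
  exact ⟨x₀, sdiff_subset_sdiff_left hWU hx₀, fun y hy => (hUA hy.1).self_of_nhds.2 hy.2⟩

theorem hausdorff_null_not_disconnect_general {n : ℕ}
    (U : Set (EuclideanSpace ℝ (Fin n))) (hUopen : IsOpen U)
    (hUconn : IsConnected U)
    (S : Set (EuclideanSpace ℝ (Fin n)))
    (hS : μH[(n : ℝ) - 1] S = 0) :
    IsConnected (U \ S) := by
  have hS' : μH[(finrank ℝ (EuclideanSpace ℝ (Fin n)) : ℝ) - 1] S = 0 := by
    rwa [finrank_euclideanSpace_fin]
  refine (hUconn.isPathConnected_diff hUopen fun x _ V hV => ?_).isConnected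
  obtain ⟨r, hr, hrV⟩ := Metric.mem_nhds_iff.1 hV
  exact ⟨ball x r, ball_mem_nhds x hr, hrV,
    (convex_ball x r).isPathConnected_diff_of_hausdorffMeasure_null isOpen_ball
      (nonempty_ball.2 hr) hS'⟩

/-- A set of `(n-1)`-dimensional Hausdorff measure zero does not disconnect an
open connected region of `ℝⁿ` (`n ≥ 2`): if `U ⊆ ℝⁿ` is nonempty, open and
connected and `S ⊆ U` satisfies `ℋ^{n-1}(S) = 0`, then `U \ S` is connected. -/
theorem hausdorff_null_not_disconnect {n : ℕ} (hn : 2 ≤ n)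
    (U : Set (EuclideanSpace ℝ (Fin n))) (hUopen : IsOpen U)
    (hUne : U.Nonempty) (hUconn : IsConnected U)
    (S : Set (EuclideanSpace ℝ (Fin n))) (hSU : S ⊆ U)
    (hS : μH[(n : ℝ) - 1] S = 0) :
    IsConnected (U \ S) :=
  hausdorff_null_not_disconnect_general U hUopen hUconn S hS
end
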